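/- The augmented propagation matrix Â = (D + I)^{-1/2}(A + I)(D + I)^{-1/2} used in GCN layers is symmetric, and all its eigenvalues lie in the interval (-1, 1]. -/

import Mathlib

/-!
Put `y = (D + I)^{-1/2} x`. Pairing `Â x = μ x` with `x` gives `μ (R + T) = Q + T`, where
`Q = yᵀ A y`, `R = ∑ᵢ Dᵢᵢ yᵢ²` and `T = ‖y‖² > 0`. For symmetric nonnegative `A`, summing
`2 |Aᵢⱼ yᵢ yⱼ| ≤ Aᵢⱼ (yᵢ² + yⱼ²)` over all pairs gives `|Q| ≤ R`, so `-(R + T) < Q + T ≤ R + T`.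
-/

open Matrix BigOperators

namespace Matrix

variable {ι : Type*} [Fintype ι]

theorem abs_dotProduct_mulVec_le_sum_rowSum_mul_sq {A : Matrix ι ι ℝ} (hA : A.IsSymm)
    (hA0 : ∀ i j, 0 ≤ A i j) (y : ι → ℝ) :
    |y ⬝ᵥ A *ᵥ y| ≤ ∑ i, (∑ j, A i j) * y i ^ 2 := by
  have hexpand : y ⬝ᵥ A *ᵥ y = ∑ i, ∑ j, A i j * (y i * y j) := by
    simp only [dotProduct, mulVec, Finset.mul_sum]
    exact Finset.sum_congr rfl fun i _ => Finset.sum_congr rfl fun j _ => by ring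
  have hswap : ∑ i, ∑ j, A i j * y j ^ 2 = ∑ i, (∑ j, A i j) * y i ^ 2 := by
    rw [Finset.sum_comm]
    simp only [Finset.sum_mul, hA.apply]
  calc |y ⬝ᵥ A *ᵥ y|
      ≤ ∑ i, ∑ j, |A i j * (y i * y j)| := by
        rw [hexpand]
        exact (Finset.abs_sum_le_sum_abs _ _).trans
          (Finset.sum_le_sum fun i _ => Finset.abs_sum_le_sum_abs _ _)
    _ ≤ ∑ i, ∑ j, A i j * ((y i ^ 2 + y j ^ 2) / 2) := by
        refine Finset.sum_le_sum fun i _ => Finset.sum_le_sum fun j _ => ?_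
        rw [abs_mul, abs_of_nonneg (hA0 i j)]
        refine mul_le_mul_of_nonneg_left ?_ (hA0 i j)
        have := two_mul_le_add_sq |y i| |y j|
        rw [sq_abs, sq_abs] at this
        rw [abs_mul]
        linarith
    _ = (∑ i, (∑ j, A i j) * y i ^ 2 + ∑ i, ∑ j, A i j * y j ^ 2) / 2 := by
        simp only [mul_add, add_div, Finset.sum_add_distrib, Finset.sum_mul, Finset.sum_div]
        congr 1 <;> exact Finset.sum_congr rfl fun i _ => Finset.sum_congr rfl fun j _ => by ring
    _ = ∑ i, (∑ j, A i j) * y i ^ 2 := by rw [hswap]; ring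

noncomputable def augmentedDegreeInvSqrt (A : Matrix ι ι ℝ) (i : ι) : ℝ :=
  1 / √(∑ j, A i j + 1)

theorem rowSum_add_one_pos {A : Matrix ι ι ℝ} (hA0 : ∀ i j, 0 ≤ A i j) (i : ι) :
    0 < ∑ j, A i j + 1 := by
  linarith [Finset.sum_nonneg fun j (_ : j ∈ Finset.univ) => hA0 i j]

theorem augmentedDegreeInvSqrt_pos {A : Matrix ι ι ℝ} (hA0 : ∀ i j, 0 ≤ A i j) (i : ι) :
    0 < augmentedDegreeInvSqrt A i := by
  have hpos := rowSum_add_one_pos hA0 i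
  unfold augmentedDegreeInvSqrt
  positivity

theorem dotProduct_self_eq_sum_augmentedDegree_mul_sq {A : Matrix ι ι ℝ}
    (hA0 : ∀ i j, 0 ≤ A i j) (x : ι → ℝ) :
    x ⬝ᵥ x = ∑ i, (∑ j, A i j + 1) * (augmentedDegreeInvSqrt A * x) i ^ 2 := by
  refine Finset.sum_congr rfl fun i _ => ?_
  have hpos := rowSum_add_one_pos hA0 i
  simp only [Pi.mul_apply, augmentedDegreeInvSqrt, div_mul_eq_mul_div, one_mul, div_pow,
    Real.sq_sqrt hpos.le]
  field_simp

variable [DecidableEq ι]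

theorem dotProduct_diagonal_mul_mul_diagonal_mulVec (w : ι → ℝ) (M : Matrix ι ι ℝ) (x : ι → ℝ) :
    x ⬝ᵥ (diagonal w * M * diagonal w) *ᵥ x = (w * x) ⬝ᵥ M *ᵥ (w * x) := by
  have hleft : x ᵥ* diagonal w = w * x := funext fun i => by simp [vecMul_diagonal, mul_comm]
  have hright : diagonal w *ᵥ x = w * x := funext (mulVec_diagonal w x)
  rw [← mulVec_mulVec, ← mulVec_mulVec, dotProduct_mulVec, hleft, hright]

/-- `Â = (D + I)^{-1/2} (A + I) (D + I)^{-1/2}`, with `D` the diagonal matrix of row sums of `A`. -/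
noncomputable def augmentedNormalizedAdjacency (A : Matrix ι ι ℝ) : Matrix ι ι ℝ :=
  diagonal (augmentedDegreeInvSqrt A) * (A + 1) * diagonal (augmentedDegreeInvSqrt A)

theorem isSymm_augmentedNormalizedAdjacency {A : Matrix ι ι ℝ} (hA : A.IsSymm) :
    (augmentedNormalizedAdjacency A).IsSymm := by
  simp only [augmentedNormalizedAdjacency, IsSymm, transpose_mul, diagonal_transpose,
    (hA.add isSymm_one).eq, Matrix.mul_assoc]

theorem dotProduct_augmentedNormalizedAdjacency_mulVec (A : Matrix ι ι ℝ) (x : ι → ℝ) :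
    x ⬝ᵥ augmentedNormalizedAdjacency A *ᵥ x =
      (augmentedDegreeInvSqrt A * x) ⬝ᵥ A *ᵥ (augmentedDegreeInvSqrt A * x) +
        (augmentedDegreeInvSqrt A * x) ⬝ᵥ (augmentedDegreeInvSqrt A * x) := by
  rw [augmentedNormalizedAdjacency, dotProduct_diagonal_mul_mul_diagonal_mulVec, add_mulVec,
    one_mulVec, dotProduct_add]

theorem eigenvalue_augmentedNormalizedAdjacency_mem_Ioc {A : Matrix ι ι ℝ} (hA : A.IsSymm)
    (hA0 : ∀ i j, 0 ≤ A i j) {μ : ℝ} {x : ι → ℝ} (hx : x ≠ 0)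
    (hμ : augmentedNormalizedAdjacency A *ᵥ x = μ • x) : -1 < μ ∧ μ ≤ 1 := by
  set y := augmentedDegreeInvSqrt A * x
  have hRayleigh : μ * ∑ i, (∑ j, A i j + 1) * y i ^ 2 = y ⬝ᵥ A *ᵥ y + y ⬝ᵥ y := by
    rw [← dotProduct_self_eq_sum_augmentedDegree_mul_sq hA0, ← smul_eq_mul, ← dotProduct_smul,
      ← hμ, dotProduct_augmentedNormalizedAdjacency_mulVec]
  have hy : y ≠ 0 := fun hy0 => hx <| funext fun i =>
    (mul_eq_zero.mp (congrFun hy0 i)).resolve_left (augmentedDegreeInvSqrt_pos hA0 i).ne'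
  have hT : 0 < y ⬝ᵥ y :=
    lt_of_le_of_ne (Finset.sum_nonneg fun i _ => mul_self_nonneg (y i))
      (Ne.symm (dotProduct_self_eq_zero.not.mpr hy))
  have hQ := abs_le.mp (abs_dotProduct_mulVec_le_sum_rowSum_mul_sq hA hA0 y)
  have hR : 0 ≤ ∑ i, (∑ j, A i j) * y i ^ 2 :=
    Finset.sum_nonneg fun i _ => mul_nonneg (Finset.sum_nonneg fun j _ => hA0 i j) (sq_nonneg _)
  have hyy : ∑ i, y i ^ 2 = y ⬝ᵥ y := by simp only [dotProduct, sq]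
  simp only [add_mul, one_mul, Finset.sum_add_distrib, hyy] at hRayleigh
  constructor <;> nlinarith

end Matrix

theorem gcn_propagation_matrix_spectrum_general (n : ℕ)
    (A : Matrix (Fin n) (Fin n) ℝ)
    (hsym : A.IsSymm) (h01 : ∀ i j, A i j = 0 ∨ A i j = 1)
    (Ahat : Matrix (Fin n) (Fin n) ℝ)
    (hAhat : Ahat = Matrix.diagonal (fun i => 1 / Real.sqrt ((∑ j, A i j) + 1)) *
      (A + 1) * Matrix.diagonal (fun i => 1 / Real.sqrt ((∑ j, A i j) + 1))) :
    Ahat.IsSymm ∧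
    ∀ (mu : ℝ) (x : Fin n → ℝ), x ≠ 0 → Ahat.mulVec x = mu • x →
      -1 < mu ∧ mu ≤ 1 := by
  have hA0 : ∀ i j, 0 ≤ A i j := fun i j => by rcases h01 i j with h | h <;> simp [h]
  subst hAhat
  change (augmentedNormalizedAdjacency A).IsSymm ∧ _
  exact ⟨isSymm_augmentedNormalizedAdjacency hsym, fun _ _ hx hμ =>
    eigenvalue_augmentedNormalizedAdjacency_mem_Ioc hsym hA0 hx hμ⟩

theorem gcn_propagation_matrix_spectrum (n : ℕ)
    (A : Matrix (Fin n) (Fin n) ℝ)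
    (hsym : A.IsSymm) (h01 : ∀ i j, A i j = 0 ∨ A i j = 1)
    (hdiag : ∀ i, A i i = 0)
    (Ahat : Matrix (Fin n) (Fin n) ℝ)
    (hAhat : Ahat = Matrix.diagonal (fun i => 1 / Real.sqrt ((∑ j, A i j) + 1)) *
      (A + 1) * Matrix.diagonal (fun i => 1 / Real.sqrt ((∑ j, A i j) + 1))) :
    Ahat.IsSymm ∧
    ∀ (mu : ℝ) (x : Fin n → ℝ), x ≠ 0 → Ahat.mulVec x = mu • x →
      -1 < mu ∧ mu ≤ 1 :=
  gcn_propagation_matrix_spectrum_general n A hsym h01 Ahat hAhat
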